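/- arXiv:1803.04206 — 6 statements merged into one kernel-verified Lean document; each statement's English description precedes it below -/
import Mathlib

section
/- Let ψ and Δ satisfy the stated conditions, and let s ∈ ℂ with 3/2 < Re s < 2Δ. Then ∑_{q=1}^∞ (1/q) ∑_{n=1}^∞ S(n,n;q) n^{−s} ψ(4πn/q) = (1/2) · ∑_{q=1}^∞ q^{−1−s} ∑_{l=1}^{q} S(l,l;q) · ( F_ψ(l/q, s) + F_ψ(1 − l/q, s) ), where in the term l = q the value F_ψ(0,s) is interpreted as F_ψ(1,s). -/
open Complex Real

/-- The Kloosterman sum `S(n,m;q) = ∑_{a ∈ (ℤ/qℤ)ˣ} e((n·a + m·a⁻¹)/q)`. -/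
noncomputable def kloos (n m : ℤ) (q : ℕ+) : ℂ :=
  ∑ a : (ZMod (q : ℕ))ˣ,
    Complex.exp (2 * Real.pi * Complex.I *
      ((n : ℂ) * (((a : ZMod (q : ℕ)).val : ℕ) : ℂ)
        + (m : ℂ) * ((((a⁻¹ : (ZMod (q : ℕ))ˣ) : ZMod (q : ℕ)).val : ℂ))) / (q : ℕ))

/-- `F_ψ(x,s) = ∑_{m=0}^∞ (m+x)^{−s} ψ(4π(m+x))`. -/
noncomputable def Fpsi (ψ : ℝ → ℂ) (x : ℝ) (s : ℂ) : ℂ :=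
  ∑' m : ℕ, ((((m : ℝ) + x) : ℂ) ^ (-s)) * ψ (4 * Real.pi * ((m : ℝ) + x))

lemma exp_div_congr (q : ℕ+) {x y : ℤ} (h : (x : ZMod (q:ℕ)) = (y : ZMod (q:ℕ))) :
    Complex.exp (2 * Real.pi * Complex.I * (x : ℂ) / (q : ℕ)) =
    Complex.exp (2 * Real.pi * Complex.I * (y : ℂ) / (q : ℕ)) := by
  have hd : ((q:ℕ) : ℤ) ∣ (x - y) := by
    exact (ZMod.intCast_zmod_eq_zero_iff_dvd (x - y) q).mp (by push_cast; rw [h]; ring)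
  obtain ⟨k, hk⟩ := hd
  have hq : ((q:ℕ) : ℂ) ≠ 0 := by exact_mod_cast (Nat.cast_ne_zero (R := ℂ)).mpr q.pos.ne'
  have hx : (x : ℂ) = (y : ℂ) + (q:ℕ) * k := by
    have : (x : ℤ) = y + (q:ℕ) * k := by omega
    exact_mod_cast congrArg (Int.cast : ℤ → ℂ) this
  rw [hx, show 2 * Real.pi * Complex.I * ((y:ℂ) + (q:ℕ) * k) / (q:ℕ)
      = 2 * Real.pi * Complex.I * (y:ℂ) / (q:ℕ) + (k : ℂ) * (2 * Real.pi * Complex.I) by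
    field_simp]
  rw [Complex.exp_add, Complex.exp_int_mul_two_pi_mul_I, mul_one]

lemma kloos_congr (q : ℕ+) {n m n' m' : ℤ} (hn : (n : ZMod (q:ℕ)) = (n' : ZMod (q:ℕ)))
    (hm : (m : ZMod (q:ℕ)) = (m' : ZMod (q:ℕ))) : kloos n m q = kloos n' m' q := by
  unfold kloos
  refine Finset.sum_congr rfl fun a _ => ?_
  have h1 : ((n * ((a : ZMod (q:ℕ)).val : ℤ) + m * (((a⁻¹ : (ZMod (q:ℕ))ˣ) : ZMod (q:ℕ)).val : ℤ) : ℤ)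
      : ZMod (q:ℕ)) = ((n' * ((a : ZMod (q:ℕ)).val : ℤ) + m' * (((a⁻¹ : (ZMod (q:ℕ))ˣ) : ZMod (q:ℕ)).val : ℤ) : ℤ) : ZMod (q:ℕ)) := by
    push_cast
    rw [hn, hm]
  have := exp_div_congr q h1
  push_cast at this
  convert this using 3 <;> push_cast <;> ring


lemma kloos_neg (q : ℕ+) (n m : ℤ) : kloos (-n) (-m) q = kloos n m q := by
  haveI : NeZero (q:ℕ) := ⟨q.pos.ne'⟩
  unfold kloos
  refine Fintype.sum_equiv (Equiv.neg ((ZMod (q:ℕ))ˣ)) _ _ fun a => ?_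
  show Complex.exp (2 * Real.pi * Complex.I *
      (((-n : ℤ) : ℂ) * (((a : ZMod (q:ℕ)).val : ℕ) : ℂ)
        + ((-m : ℤ) : ℂ) * ((((a⁻¹ : (ZMod (q:ℕ))ˣ) : ZMod (q:ℕ)).val : ℂ))) / (q : ℕ))
    = Complex.exp (2 * Real.pi * Complex.I *
      ((n : ℂ) * ((((-a : (ZMod (q:ℕ))ˣ) : ZMod (q:ℕ)).val : ℕ) : ℂ)
        + (m : ℂ) * (((((-a)⁻¹ : (ZMod (q:ℕ))ˣ) : ZMod (q:ℕ)).val : ℂ))) / (q : ℕ))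
  have key : ((((-n) * ((a : ZMod (q:ℕ)).val : ℤ) + (-m) * (((a⁻¹ : (ZMod (q:ℕ))ˣ) : ZMod (q:ℕ)).val : ℤ)) : ℤ) : ZMod (q:ℕ))
      = ((n * ((((-a : (ZMod (q:ℕ))ˣ) : ZMod (q:ℕ)).val : ℤ)) + m * ((((-a)⁻¹ : (ZMod (q:ℕ))ˣ) : ZMod (q:ℕ)).val : ℤ) : ℤ) : ZMod (q:ℕ)) := by
    push_cast
    rw [ZMod.natCast_val, ZMod.natCast_val, ZMod.natCast_val, ZMod.natCast_val,
      ZMod.cast_id, ZMod.cast_id, ZMod.cast_id, ZMod.cast_id]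
    have h1 : ((-a : (ZMod (q:ℕ))ˣ) : ZMod (q:ℕ)) = -(a : ZMod (q:ℕ)) := rfl
    have h2 : (((-a)⁻¹ : (ZMod (q:ℕ))ˣ) : ZMod (q:ℕ)) = -((a⁻¹ : (ZMod (q:ℕ))ˣ) : ZMod (q:ℕ)) := by
      have h3 : (-a)⁻¹ = -(a⁻¹) := by simp
      rw [h3]; rfl
    rw [h1] at *
    rw [h2]; ring
  have := exp_div_congr q key
  push_cast at this
  convert this using 3 <;> push_cast <;> ring


lemma kloos_abs_le (n m : ℤ) (q : ℕ+) : ‖kloos n m q‖ ≤ (q : ℝ) := by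
  haveI : NeZero (q:ℕ) := ⟨q.pos.ne'⟩
  refine le_trans (norm_sum_le _ _) ?_
  have h1 : ∀ a : (ZMod (q:ℕ))ˣ, ‖(Complex.exp (2 * Real.pi * Complex.I *
      ((n : ℂ) * (((a : ZMod (q : ℕ)).val : ℕ) : ℂ)
        + (m : ℂ) * ((((a⁻¹ : (ZMod (q : ℕ))ˣ) : ZMod (q : ℕ)).val : ℂ))) / (q : ℕ)))‖ = 1 := by
    intro a
    rw [show 2 * Real.pi * Complex.I *
      ((n : ℂ) * (((a : ZMod (q : ℕ)).val : ℕ) : ℂ)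
        + (m : ℂ) * ((((a⁻¹ : (ZMod (q : ℕ))ˣ) : ZMod (q : ℕ)).val : ℂ))) / (q : ℕ)
      = (((2 * Real.pi * ((n : ℝ) * ((a : ZMod (q:ℕ)).val : ℕ)
          + (m : ℝ) * (((a⁻¹ : (ZMod (q:ℕ))ˣ) : ZMod (q:ℕ)).val : ℕ)) / (q:ℕ)) : ℝ) : ℂ) * Complex.I by
        push_cast; ring]
    exact Complex.norm_exp_ofReal_mul_I _
  calc ∑ a : (ZMod (q:ℕ))ˣ, ‖_‖ = (Fintype.card ((ZMod (q:ℕ))ˣ) : ℝ) := by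
        rw [Finset.sum_congr rfl fun a _ => h1 a]; simp
    _ ≤ ((q:ℕ) : ℝ) := by
        have := ZMod.card_units_eq_totient (q:ℕ)
        have h2 : Fintype.card ((ZMod (q:ℕ))ˣ) ≤ (q:ℕ) := by
          rw [this]; exact Nat.totient_le _
        exact_mod_cast h2

set_option maxHeartbeats 1000000 in
lemma per_q (ψ : ℝ → ℂ) (K : ℝ) (hK0 : 0 ≤ K)
    (hK : ∀ x : ℝ, 0 < x → ‖ψ x‖ ≤ K)
    (s : ℂ) (hs1 : 1 < s.re) (q : ℕ+) :
    (1 / (q : ℂ)) * ∑' n : ℕ+, kloos n n q * (n : ℂ) ^ (-s) * ψ (4 * Real.pi * n / q)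
    = (1 / 2) * ((q : ℂ) ^ (-(1 + s)) * ∑ l ∈ Finset.Icc 1 (q : ℕ),
        kloos l l q * (Fpsi ψ ((l : ℝ) / (q : ℝ)) s
          + Fpsi ψ (if l = (q : ℕ) then 1 else 1 - (l : ℝ) / (q : ℝ)) s)) := by
  haveI : NeZero (q:ℕ) := ⟨q.pos.ne'⟩
  set Q : ℕ := (q : ℕ) with hQ
  have hq0 : (0:ℝ) < (Q:ℝ) := by exact_mod_cast q.pos
  have hqc : ((Q:ℕ) : ℂ) ≠ 0 := by exact_mod_cast q.pos.ne'
  set f0 : ℕ → ℂ := fun n => kloos n n q * ((n:ℕ):ℂ) ^ (-s) * ψ (4 * Real.pi * (n:ℝ) / (Q:ℝ)) with hf0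
  -- summability
  have hsum : Summable (fun a : ℕ => f0 (a+1)) := by
    refine Summable.of_norm_bounded
      (g := fun a : ℕ => (Q:ℝ) * K * (((a:ℝ)+1) ^ s.re)⁻¹) ?_ ?_
    · refine Summable.mul_left _ ?_
      have h := Real.summable_nat_rpow_inv.mpr hs1
      have := (summable_nat_add_iff (f := fun n : ℕ => (((n:ℝ)) ^ s.re)⁻¹) 1).mpr h
      exact this.congr fun a => by push_cast; ring_nf
    · intro a
      have hpos : (0:ℝ) < ((a+1 : ℕ):ℝ) := by positivity
      have h1 : ‖((a+1:ℕ):ℂ) ^ (-s)‖ = (((a+1:ℕ):ℝ) ^ s.re)⁻¹ := by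
        rw [show (((a+1:ℕ)):ℂ) = ((((a+1:ℕ)):ℝ) : ℂ) by push_cast; ring,
          Complex.norm_cpow_eq_rpow_re_of_pos hpos]
        rw [show (-s).re = -(s.re) by simp, Real.rpow_neg hpos.le]
      have h2 : ‖ψ (4 * Real.pi * ((a+1:ℕ):ℝ) / (Q:ℝ))‖ ≤ K :=
        hK _ (by positivity)
      have h3 : ‖kloos ((a+1:ℕ):ℤ) ((a+1:ℕ):ℤ) q‖ ≤ (Q:ℝ) := kloos_abs_le _ _ q
      rw [hf0]
      simp only [norm_mul]
      rw [h1]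
      have hrw : ((((a:ℝ))+1) ^ s.re)⁻¹ = (((a+1:ℕ):ℝ) ^ s.re)⁻¹ := by push_cast; ring_nf
      rw [hrw]
      have hnn : (0:ℝ) ≤ ((((a+1:ℕ)):ℝ) ^ s.re)⁻¹ := by positivity
      calc ‖kloos ((a+1:ℕ):ℤ) ((a+1:ℕ):ℤ) q‖ * (((a+1:ℕ):ℝ) ^ s.re)⁻¹
            * ‖ψ (4 * Real.pi * ((a+1:ℕ):ℝ) / (Q:ℝ))‖
          ≤ (Q:ℝ) * (((a+1:ℕ):ℝ) ^ s.re)⁻¹ * K := by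
            apply mul_le_mul (mul_le_mul_of_nonneg_right h3 hnn) h2 (by positivity) (by positivity)
        _ = (Q:ℝ) * K * (((a+1:ℕ):ℝ) ^ s.re)⁻¹ := by ring
  -- step 1: pnat to nat
  have e1 : (∑' n : ℕ+, kloos n n q * (n : ℂ) ^ (-s) * ψ (4 * Real.pi * n / q))
      = ∑' a : ℕ, f0 (a+1) := by
    rw [← Equiv.tsum_eq (Equiv.pnatEquivNat.symm)
      (fun n : ℕ+ => kloos n n q * (n : ℂ) ^ (-s) * ψ (4 * Real.pi * n / q))]
    exact tsum_congr fun a => rfl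
  -- step 2 : folding
  have key : ∀ l : ℕ, 1 ≤ l → l ≤ Q →
      (∑' m : ℕ, f0 (m * Q + l)) = kloos l l q * ((Q:ℕ):ℂ) ^ (-s) * Fpsi ψ ((l:ℝ)/(Q:ℝ)) s := by
    intro l hl1 hl2
    have hterm : ∀ m : ℕ, f0 (m * Q + l)
        = (kloos l l q * ((Q:ℕ):ℂ) ^ (-s)) *
          (((((m:ℝ) + (l:ℝ)/(Q:ℝ)) : ℝ):ℂ) ^ (-s) * ψ (4 * Real.pi * ((m:ℝ) + (l:ℝ)/(Q:ℝ)))) := by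
      intro m
      rw [hf0]
      have hk : kloos ((m*Q+l : ℕ):ℤ) ((m*Q+l : ℕ):ℤ) q = kloos l l q := by
        refine kloos_congr q ?_ ?_ <;>
        · push_cast
          simp [ZMod.natCast_self]
      have hx0 : (0:ℝ) ≤ (m:ℝ) + (l:ℝ)/(Q:ℝ) := by positivity
      have hb : (((m*Q+l : ℕ)):ℂ) = (((Q:ℝ)):ℂ) * ((((m:ℝ) + (l:ℝ)/(Q:ℝ)) : ℝ):ℂ) := by
        push_cast
        field_simp
      have hcp : (((m*Q+l : ℕ)):ℂ) ^ (-s)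
          = (((Q:ℝ)):ℂ) ^ (-s) * ((((m:ℝ) + (l:ℝ)/(Q:ℝ)) : ℝ):ℂ) ^ (-s) := by
        rw [hb, Complex.mul_cpow_ofReal_nonneg hq0.le hx0]
      have harg : 4 * Real.pi * ((m*Q+l : ℕ):ℝ) / (Q:ℝ) = 4 * Real.pi * ((m:ℝ) + (l:ℝ)/(Q:ℝ)) := by
        push_cast
        field_simp
      show kloos ((m*Q+l : ℕ):ℤ) ((m*Q+l : ℕ):ℤ) q * (((m*Q+l : ℕ)):ℂ) ^ (-s)
          * ψ (4 * Real.pi * ((m*Q+l : ℕ):ℝ) / (Q:ℝ)) = _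
      rw [hk, hcp, harg]
      push_cast
      ring
    rw [tsum_congr hterm, tsum_mul_left]
    unfold Fpsi
    push_cast
    ring
  have e2 : (∑' a : ℕ, f0 (a+1))
      = ∑ l ∈ Finset.Icc 1 Q, kloos l l q * ((Q:ℕ):ℂ) ^ (-s) * Fpsi ψ ((l:ℝ)/(Q:ℝ)) s := by
    have hsump : Summable (fun p : ℕ × Fin Q => f0 (p.1*Q + (p.2:ℕ) + 1)) := by
      have h := ((Nat.divModEquiv Q).symm.summable_iff (f := fun a => f0 (a+1))).mpr hsum
      exact h.congr fun p => by simp [Nat.divModEquiv, Function.comp]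
    have step1 : ∑' a:ℕ, f0 (a+1) = ∑' p : ℕ × Fin Q, f0 (p.1*Q + (p.2:ℕ) + 1) := by
      rw [← ((Nat.divModEquiv Q).symm.tsum_eq (fun a => f0 (a+1)))]
      exact tsum_congr fun p => by simp [Nat.divModEquiv]
    have step2 : ∑' p : ℕ × Fin Q, f0 (p.1*Q + (p.2:ℕ) + 1)
        = ∑' m : ℕ, ∑ j : Fin Q, f0 (m*Q + (j:ℕ) + 1) := by
      rw [Summable.tsum_prod' hsump (fun m => Summable.of_finite)]
      exact tsum_congr fun m => tsum_fintype _
    have step3 : ∑' m : ℕ, ∑ j : Fin Q, f0 (m*Q + (j:ℕ) + 1)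
        = ∑ j : Fin Q, ∑' m : ℕ, f0 (m*Q + (j:ℕ) + 1) := by
      refine Summable.tsum_finsetSum (f := fun (j : Fin Q) (m : ℕ) => f0 (m*Q + (j:ℕ) + 1))
        (s := Finset.univ) fun j _ => ?_
      have hinj : Function.Injective (fun m : ℕ => ((m, j) : ℕ × Fin Q)) :=
        fun a b h => by simpa using congrArg Prod.fst h
      exact (hsump.comp_injective hinj).congr fun m => rfl
    have step4 : ∀ j : Fin Q, (∑' m : ℕ, f0 (m*Q + (j:ℕ) + 1))
        = kloos ((((j:ℕ)+1 : ℕ)):ℤ) ((((j:ℕ)+1 : ℕ)):ℤ) q * ((Q:ℕ):ℂ)^(-s)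
          * Fpsi ψ ((((j:ℕ)+1 : ℕ):ℝ)/(Q:ℝ)) s := by
      intro j
      exact (tsum_congr fun m => congrArg f0 (by ring)).trans
        (key ((j:ℕ)+1) (Nat.le_add_left 1 _) (Nat.succ_le_of_lt j.isLt))
    rw [step1, step2, step3, Finset.sum_congr rfl (fun j _ => step4 j)]
    refine Finset.sum_nbij' (i := fun j : Fin Q => (j:ℕ)+1)
      (j := fun l => (⟨(l-1) % Q, Nat.mod_lt _ q.pos⟩ : Fin Q)) ?_ ?_ ?_ ?_ ?_
    · intro j _
      simp only [Finset.mem_Icc]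
      omega
    · intro l _
      exact Finset.mem_univ _
    · intro j _
      apply Fin.ext
      show ((j:ℕ) + 1 - 1) % Q = (j:ℕ)
      rw [Nat.add_sub_cancel]
      exact Nat.mod_eq_of_lt j.isLt
    · intro l hl
      simp only [Finset.mem_Icc] at hl
      show (l - 1) % Q + 1 = l
      rw [Nat.mod_eq_of_lt (by omega)]
      omega
    · intro j _
      norm_num
  -- reflection
  have refl : ∑ l ∈ Finset.Icc 1 Q, kloos l l q * Fpsi ψ ((l:ℝ)/(Q:ℝ)) s
      = ∑ l ∈ Finset.Icc 1 Q, kloos l l q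
          * Fpsi ψ (if l = Q then 1 else 1 - (l:ℝ)/(Q:ℝ)) s := by
    refine Finset.sum_nbij' (i := fun l => if l = Q then Q else Q - l)
      (j := fun l => if l = Q then Q else Q - l) ?_ ?_ ?_ ?_ ?_
    · intro l hl
      simp only [Finset.mem_Icc] at hl ⊢
      split <;> omega
    · intro l hl
      simp only [Finset.mem_Icc] at hl ⊢
      split <;> omega
    · intro l hl
      simp only [Finset.mem_Icc] at hl
      rcases eq_or_ne l Q with h | h
      · simp [h]
      · have h2 : Q - l ≠ Q := by omega
        simp only [if_neg h, if_neg h2]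
        omega
    · intro l hl
      simp only [Finset.mem_Icc] at hl
      rcases eq_or_ne l Q with h | h
      · simp [h]
      · have h2 : Q - l ≠ Q := by omega
        simp only [if_neg h, if_neg h2]
        omega
    · intro l hl
      simp only [Finset.mem_Icc] at hl
      rcases eq_or_ne l Q with h | h
      · subst h
        beta_reduce
        rw [if_pos rfl, if_pos rfl, div_self hq0.ne']
      · have hlt : l < Q := lt_of_le_of_ne hl.2 h
        have h2 : Q - l ≠ Q := by omega
        beta_reduce
        rw [if_neg h, if_neg h2]
        have hk : kloos ((Q - l : ℕ):ℤ) ((Q - l : ℕ):ℤ) q = kloos l l q := by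
          rw [← kloos_neg q l l]
          refine kloos_congr q ?_ ?_ <;>
          · rw [Nat.cast_sub hl.2]
            push_cast
            simp [ZMod.natCast_self]
        have harg : ((Q - l : ℕ):ℝ)/(Q:ℝ) = 1 - (l:ℝ)/(Q:ℝ) := by
          rw [Nat.cast_sub hl.2]
          field_simp
        rw [hk, harg, sub_sub_cancel]
  -- assemble
  rw [e1, e2]
  have hfac : ∀ l : ℕ, kloos l l q * ((Q:ℕ):ℂ) ^ (-s) * Fpsi ψ ((l:ℝ)/(Q:ℝ)) s
      = ((Q:ℕ):ℂ) ^ (-s) * (kloos l l q * Fpsi ψ ((l:ℝ)/(Q:ℝ)) s) := fun l => by ring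
  rw [Finset.sum_congr rfl fun l _ => hfac l, ← Finset.mul_sum]
  have hpow : (1 / ((q:ℕ):ℂ)) * ((Q:ℕ):ℂ) ^ (-s) = ((q:ℕ):ℂ) ^ (-(1+s)) := by
    rw [show -(1+s) = (-1) + (-s) by ring, Complex.cpow_add _ _ hqc, Complex.cpow_neg_one]
    rw [one_div]
  have hsplit : ∑ l ∈ Finset.Icc 1 Q,
        kloos l l q * (Fpsi ψ ((l : ℝ) / ((Q:ℕ) : ℝ)) s
          + Fpsi ψ (if l = Q then 1 else 1 - (l : ℝ) / ((Q:ℕ) : ℝ)) s)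
      = (∑ l ∈ Finset.Icc 1 Q, kloos l l q * Fpsi ψ ((l:ℝ)/(Q:ℝ)) s)
        + ∑ l ∈ Finset.Icc 1 Q, kloos l l q * Fpsi ψ (if l = Q then 1 else 1 - (l:ℝ)/(Q:ℝ)) s := by
    rw [← Finset.sum_add_distrib]
    exact Finset.sum_congr rfl fun l _ => by ring
  calc 1 / ((q:ℕ):ℂ) * (((Q:ℕ):ℂ)^(-s) * ∑ l ∈ Finset.Icc 1 Q, kloos l l q * Fpsi ψ ((l:ℝ)/(Q:ℝ)) s)
      = ((1 / ((q:ℕ):ℂ)) * ((Q:ℕ):ℂ)^(-s)) * ∑ l ∈ Finset.Icc 1 Q, kloos l l q * Fpsi ψ ((l:ℝ)/(Q:ℝ)) s := by ring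
    _ = ((q:ℕ):ℂ)^(-(1+s)) * ∑ l ∈ Finset.Icc 1 Q, kloos l l q * Fpsi ψ ((l:ℝ)/(Q:ℝ)) s := by rw [hpow]
    _ = (1/2) * (((q:ℕ):ℂ)^(-(1+s)) * ((∑ l ∈ Finset.Icc 1 Q, kloos l l q * Fpsi ψ ((l:ℝ)/(Q:ℝ)) s)
          + ∑ l ∈ Finset.Icc 1 Q, kloos l l q * Fpsi ψ (if l = Q then 1 else 1 - (l:ℝ)/(Q:ℝ)) s)) := by
        rw [← refl]; ring
    _ = (1 / 2) * (((q:ℕ):ℂ) ^ (-(1 + s)) * ∑ l ∈ Finset.Icc 1 Q,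
        kloos l l q * (Fpsi ψ ((l : ℝ) / ((Q:ℕ) : ℝ)) s
          + Fpsi ψ (if l = Q then 1 else 1 - (l : ℝ) / ((Q:ℕ) : ℝ)) s)) := by rw [hsplit]


theorem kloosterman_series_folding
    (ψ : ℝ → ℂ) (Δ K : ℝ) (hΔ : 3 / 4 < Δ)
    (hsmooth : ContDiffOn ℝ (⊤ : ℕ∞) ψ (Set.Ioi 0))
    (hsmall : ∀ x : ℝ, 0 < x → x ≤ 1 → ‖ψ x‖ ≤ K * x ^ (2 * Δ))
    (hlarge : ∀ x : ℝ, 1 ≤ x → ‖ψ x‖ + ‖deriv ψ x‖ ≤ K * x⁻¹)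
    (s : ℂ) (hs1 : 3 / 2 < s.re) (hs2 : s.re < 2 * Δ) :
    ∑' q : ℕ+, (1 / (q : ℂ)) * ∑' n : ℕ+,
        kloos n n q * (n : ℂ) ^ (-s) * ψ (4 * Real.pi * n / q)
      = (1 / 2) * ∑' q : ℕ+, (q : ℂ) ^ (-(1 + s)) * ∑ l ∈ Finset.Icc 1 (q : ℕ),
          kloos l l q * (Fpsi ψ ((l : ℝ) / (q : ℝ)) s
            + Fpsi ψ (if l = (q : ℕ) then 1 else 1 - (l : ℝ) / (q : ℝ)) s) := by
  have hψ : ∀ x : ℝ, 0 < x → ‖ψ x‖ ≤ max K 0 := by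
    intro x hx
    rcases le_or_gt x 1 with h1 | h1
    · have h := hsmall x hx h1
      have hp0 : (0:ℝ) ≤ x ^ (2*Δ) := Real.rpow_nonneg hx.le _
      have hp1 : x ^ (2*Δ) ≤ 1 := Real.rpow_le_one hx.le h1 (by linarith)
      rcases le_total K 0 with hK | hK
      · have h2 : K * x ^ (2*Δ) ≤ 0 := mul_nonpos_of_nonpos_of_nonneg hK hp0
        have := le_max_right K 0
        linarith
      · have h2 : K * x ^ (2*Δ) ≤ K := by nlinarith
        have := le_max_left K 0
        linarith
    · have h := hlarge x h1.le
      have habs1 : (0:ℝ) ≤ ‖ψ x‖ := norm_nonneg _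
      have habs2 : (0:ℝ) ≤ ‖deriv ψ x‖ := norm_nonneg _
      have hxinv : (0:ℝ) < x⁻¹ := by positivity
      have hK0 : (0:ℝ) ≤ K := by nlinarith
      have hxi1 : x⁻¹ ≤ 1 := by
        rw [inv_le_one_iff₀]
        right
        linarith
      have h2 : K * x⁻¹ ≤ K := by nlinarith
      have := le_max_left K 0
      linarith
  have hs1' : 1 < s.re := by linarith
  calc ∑' q : ℕ+, (1 / (q : ℂ)) * ∑' n : ℕ+,
        kloos n n q * (n : ℂ) ^ (-s) * ψ (4 * Real.pi * n / q)
      = ∑' q : ℕ+, (1 / 2) * ((q : ℂ) ^ (-(1 + s)) * ∑ l ∈ Finset.Icc 1 (q : ℕ),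
          kloos l l q * (Fpsi ψ ((l : ℝ) / (q : ℝ)) s
            + Fpsi ψ (if l = (q : ℕ) then 1 else 1 - (l : ℝ) / (q : ℝ)) s)) :=
        tsum_congr fun q => per_q ψ (max K 0) (le_max_right _ _) hψ s hs1' q
    _ = _ := tsum_mul_left
end

section
/- Let X ≥ 2 and T ≥ 1 be real, and let a, b, c be as defined. For n ≥ 0 set z₊(n) = 2b + n + 2ai and z₋(n) = 2b − n + 2ai. Then for every real n ≥ 0, every real t, and each sign ε ∈ {+1, −1}: −π|t| − t·arg(n²/4 + c²) + ε·t·( arg z₊(n) − arg z₋(n) ) ≤ 0, where arg denotes the principal argument of a complex number (taking values in (−π, π]). -/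
open Complex Real

theorem argument_inequality (X T : ℝ) (hX : 2 ≤ X) (hT : 1 ≤ T)
    (a b : ℝ) (c : ℂ)
    (ha : a = Real.sinh (Real.log X / 2) * Real.sin (1 / (2 * T)))
    (hb : b = Real.cosh (Real.log X / 2) * Real.cos (1 / (2 * T)))
    (hc : c = (a : ℂ) - (b : ℂ) * Complex.I)
    (n : ℝ) (hn : 0 ≤ n) (t : ℝ) (ε : ℝ) (hε : ε = 1 ∨ ε = -1) :
    -Real.pi * |t| - t * Complex.arg ((n : ℂ) ^ 2 / 4 + c ^ 2)
      + ε * t * (Complex.arg (((2 * b + n : ℝ) : ℂ) + 2 * (a : ℂ) * Complex.I)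
        - Complex.arg (((2 * b - n : ℝ) : ℂ) + 2 * (a : ℂ) * Complex.I)) ≤ 0 := by
  have hπ := Real.pi_pos
  -- a > 0
  have hTpos : (0:ℝ) < 1 / (2 * T) := by positivity
  have hTle : 1 / (2 * T) ≤ 1 / 2 := by
    apply div_le_div_of_nonneg_left (by norm_num) (by norm_num) (by linarith)
  have ha0 : 0 < a := by
    rw [ha]
    apply mul_pos
    · rw [Real.sinh_pos_iff]
      have : (1:ℝ) < X := by linarith
      have := Real.log_pos this
      linarith
    · apply Real.sin_pos_of_pos_of_lt_pi hTpos
      linarith [Real.pi_gt_three]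
  have hb0 : 0 < b := by
    rw [hb]
    apply mul_pos (Real.cosh_pos _)
    apply Real.cos_pos_of_mem_Ioo
    constructor <;> [linarith [Real.pi_gt_three]; linarith [Real.pi_gt_three]]
  set zp : ℂ := ((2 * b + n : ℝ) : ℂ) + 2 * (a : ℂ) * Complex.I with hzp
  set zm : ℂ := ((2 * b - n : ℝ) : ℂ) + 2 * (a : ℂ) * Complex.I with hzm
  have hzpim : zp.im = 2 * a := by simp [hzp]
  have hzmim : zm.im = 2 * a := by simp [hzm]
  have hzpne : zp ≠ 0 := fun h => by simp [h] at hzpim; linarith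
  have hzmne : zm ≠ 0 := fun h => by simp [h] at hzmim; linarith
  set A := Complex.arg zp with hA
  set B := Complex.arg zm with hB
  have hA0 : 0 ≤ A := Complex.arg_nonneg_iff.2 (by rw [hzpim]; linarith)
  have hB0 : 0 ≤ B := Complex.arg_nonneg_iff.2 (by rw [hzmim]; linarith)
  have hAπ : A ≤ π := Complex.arg_le_pi _
  have hBπ : B ≤ π := Complex.arg_le_pi _
  have hApos : 0 < A := by
    rcases hA0.lt_or_eq with h | h
    · exact h
    · exfalso
      have := Complex.arg_eq_zero_iff.1 h.symm
      rw [hzpim] at this; linarith [this.2]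
  -- the key identity
  set w : ℂ := (n : ℂ) ^ 2 / 4 + c ^ 2 with hw
  have hfac : w = ((1/4 : ℝ) : ℂ) * ((-1) * zp * zm) := by
    rw [hw, hc, hzp, hzm]; push_cast; ring_nf; rw [Complex.I_sq]; ring
  have hargw : Complex.arg w = A + B - π := by
    have h1 : Complex.arg w = Complex.arg ((-1) * zp * zm) := by
      rw [hfac]; exact Complex.arg_real_mul _ (by norm_num)
    have h2 : (Complex.arg ((-1) * zp * zm) : Real.Angle)
        = ((A + B - π : ℝ) : Real.Angle) := by
      rw [Complex.arg_mul_coe_angle (mul_ne_zero (by norm_num) hzpne) hzmne,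
        Complex.arg_mul_coe_angle (by norm_num : (-1:ℂ) ≠ 0) hzpne,
        Complex.arg_neg_one]
      rw [Real.Angle.coe_sub, Real.Angle.coe_add, sub_eq_add_neg, Real.Angle.neg_coe_pi]
      abel
    have h3 : (Complex.arg w : Real.Angle) = ((A + B - π : ℝ) : Real.Angle) := by
      rw [h1]; exact h2
    have h4 : ((A + B - π : ℝ) : Real.Angle).toReal = A + B - π := by
      rw [Real.Angle.toReal_coe_eq_self_iff_mem_Ioc]
      constructor <;> simp <;> linarith
    calc Complex.arg w = (Complex.arg w : Real.Angle).toReal :=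
          (Complex.arg_coe_angle_toReal_eq_arg w).symm
      _ = A + B - π := by rw [h3, h4]
  rw [hargw]
  rcases hε with h | h <;> subst h <;> rcases abs_cases t with ⟨h1, h2⟩ | ⟨h1, h2⟩ <;> rw [h1] <;> nlinarith
end

section
/- For all real numbers a, b, n with b > a > 0 and 0 < n ≤ 2·√(b² − a²): arctan( (b² − a² − n²/4) / (2ab) ) + arctan( 2a / (2b + n) ) ≤ π/2. -/
open Real

theorem arctan_sum_le_pi_div_two (a b n : ℝ) (ha : 0 < a) (hab : a < b)
    (hn : 0 < n) (hn2 : n ≤ 2 * Real.sqrt (b ^ 2 - a ^ 2)) :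
    Real.arctan ((b ^ 2 - a ^ 2 - n ^ 2 / 4) / (2 * a * b))
      + Real.arctan (2 * a / (2 * b + n)) ≤ Real.pi / 2 := by
  have hb : 0 < b := ha.trans hab
  have hden : 0 < 2 * b + n := by linarith
  have hy : 0 < 2 * a / (2 * b + n) := by positivity
  have hinv : Real.arctan ((2 * a / (2 * b + n))⁻¹)
      = Real.pi / 2 - Real.arctan (2 * a / (2 * b + n)) :=
    Real.arctan_inv_of_pos hy
  have hle : (b ^ 2 - a ^ 2 - n ^ 2 / 4) / (2 * a * b) ≤ (2 * a / (2 * b + n))⁻¹ := by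
    rw [inv_div, div_le_div_iff₀ (by positivity) (by positivity)]
    nlinarith [sq_nonneg n, sq_nonneg (a + b), mul_pos hn hb]
  have := Real.arctan_strictMono.monotone hle
  linarith [hinv ▸ this]
end

section
/- For all real numbers a, b, n with b > a > 0 and 0 < n ≤ 2·√(b² − a²): arctan( (b² − a² − n²/4) / (2ab) ) ≤ arctan( (2b − n) / (2a) ) + arctan( 2a / (2b + n) ). -/
/-! With `x = (2b - n)/(2a)` and `y = 2a/(2b + n)` one has `xy = (2b - n)/(2b + n) < 1`, so the
addition formula gives `arctan x + arctan y = arctan ((4b² + 4a² - n²)/(4an))`. By monotonicity of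
`arctan` it remains to compare `(4(b² - a²) - n²)/(8ab)` with that quotient: the numerator grows by
`8a²`, and the denominator shrinks since `n ≤ 2√(b² - a²) < 2b`. -/

open Real

theorem arctan_div_add_arctan_div {a b n : ℝ} (ha : a ≠ 0) (hn : 0 < n) (hbn : 0 < 2 * b + n) :
    arctan ((2 * b - n) / (2 * a)) + arctan (2 * a / (2 * b + n))
      = arctan ((4 * b ^ 2 + 4 * a ^ 2 - n ^ 2) / (4 * a * n)) := by
  have hprod : (2 * b - n) / (2 * a) * (2 * a / (2 * b + n)) = (2 * b - n) / (2 * b + n) := by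
    field_simp
  have hprod_lt : (2 * b - n) / (2 * a) * (2 * a / (2 * b + n)) < 1 := by
    rw [hprod, div_lt_one hbn]
    linarith
  rw [arctan_add hprod_lt, hprod]
  congr 1
  field_simp [hn.ne', hbn.ne']
  ring

theorem sq_le_of_le_two_mul_sqrt {n s : ℝ} (hn : 0 < n) (h : n ≤ 2 * √s) : n ^ 2 ≤ 4 * s := by
  have := (le_sqrt' (y := s) (half_pos hn)).1 (by linarith)
  linarith

theorem div_le_div_of_sq_le {a b n : ℝ} (ha : 0 < a) (hb : 0 < b) (hn : 0 < n)
    (h : n ^ 2 ≤ 4 * (b ^ 2 - a ^ 2)) :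
    (b ^ 2 - a ^ 2 - n ^ 2 / 4) / (2 * a * b)
      ≤ (4 * b ^ 2 + 4 * a ^ 2 - n ^ 2) / (4 * a * n) := by
  have hn_le : n ≤ 2 * b := by nlinarith
  calc (b ^ 2 - a ^ 2 - n ^ 2 / 4) / (2 * a * b)
      = (4 * (b ^ 2 - a ^ 2) - n ^ 2) / (8 * a * b) := by field_simp; ring
    _ ≤ (4 * b ^ 2 + 4 * a ^ 2 - n ^ 2) / (8 * a * b) :=
        div_le_div_of_nonneg_right (by nlinarith) (by positivity)
    _ ≤ (4 * b ^ 2 + 4 * a ^ 2 - n ^ 2) / (4 * a * n) :=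
        div_le_div_of_nonneg_left (by nlinarith) (by positivity) (by nlinarith)

theorem arctan_inequality (a b n : ℝ) (ha : 0 < a) (hab : a < b)
    (hn : 0 < n) (hn2 : n ≤ 2 * Real.sqrt (b ^ 2 - a ^ 2)) :
    Real.arctan ((b ^ 2 - a ^ 2 - n ^ 2 / 4) / (2 * a * b))
      ≤ Real.arctan ((2 * b - n) / (2 * a)) + Real.arctan (2 * a / (2 * b + n)) := by
  have hb : 0 < b := ha.trans hab
  rw [arctan_div_add_arctan_div ha.ne' hn (by linarith)]
  exact arctan_strictMono.monotone
    (div_le_div_of_sq_le ha hb hn (sq_le_of_le_two_mul_sqrt hn hn2))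
end

section
/- There exists a constant C > 0 such that for every γ ∈ (0, 1]: ∫₀^∞ x · ( (3/2 − x²)² + 6x²·cos²γ )^{1/2} · ( (1 − x²)² + 4x²·sin²γ )^{−3/2} dx ≤ C · γ^{−2}. -/
/-!
Away from `x = 0` the denominator satisfies `(1 - x²)² + 4x² sin²γ ≥ x² ((x - 1)² + 2 sin²γ)`,
and near `0` it is bounded below, so the integrand is at most `60 ((x - 1)² + b)^(-3/2)` with
`b = 2 sin²γ`. This profile has the antiderivative `(x - 1) / (b √((x - 1)² + b))`, hence
integral at most `2 / b`, and Jordan's inequality `sin γ ≥ 2γ/π` turns `1 / sin²γ` into `γ⁻²`.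
-/

open Real MeasureTheory Set Filter Topology

lemma rpow_neg_three_halves {t : ℝ} (ht : 0 ≤ t) : t ^ (-(3 / 2 : ℝ)) = (√t ^ 3)⁻¹ := by
  rw [rpow_neg ht, sqrt_eq_rpow, ← rpow_natCast, ← rpow_mul ht]
  norm_num

section InvSqrtCube

variable {a b : ℝ}

lemma hasDerivAt_div_mul_sqrt_sq_add (hb : 0 < b) (x : ℝ) :
    HasDerivAt (fun y => (y - a) / (b * √((y - a) ^ 2 + b)))
      (√((x - a) ^ 2 + b) ^ 3)⁻¹ x := by
  have hq : 0 < (x - a) ^ 2 + b := by positivity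
  have hsub : HasDerivAt (fun y => y - a) 1 x := (hasDerivAt_id x).sub_const a
  have hroot : HasDerivAt (fun y => b * √((y - a) ^ 2 + b))
      (b * (2 * (x - a) / (2 * √((x - a) ^ 2 + b)))) x := by
    refine HasDerivAt.const_mul b (HasDerivAt.sqrt ?_ hq.ne')
    simpa using (hsub.pow 2).add_const b
  have hquot : HasDerivAt (fun y => (y - a) / (b * √((y - a) ^ 2 + b))) _ x :=
    hsub.div hroot (by positivity)
  convert hquot using 1
  have hsq : √((x - a) ^ 2 + b) ^ 2 = (x - a) ^ 2 + b := sq_sqrt hq.le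
  field_simp
  linear_combination (-1 : ℝ) * hsq

lemma tendsto_div_mul_sqrt_sq_add_atTop (hb : 0 < b) :
    Tendsto (fun y => (y - a) / (b * √((y - a) ^ 2 + b))) atTop (𝓝 b⁻¹) := by
  have hq : Tendsto (fun y : ℝ => (y - a) ^ 2 + b) atTop atTop :=
    tendsto_atTop_add_const_right _ b
      ((tendsto_pow_atTop two_ne_zero).comp (tendsto_atTop_add_const_right _ (-a) tendsto_id))
  have hlim : Tendsto (fun y => √(1 - b / ((y - a) ^ 2 + b)) / b) atTop (𝓝 b⁻¹) := by
    simpa using (((tendsto_const_nhds (x := (1 : ℝ))).sub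
      (tendsto_const_nhds.div_atTop hq)).sqrt).div_const b
  refine hlim.congr' ?_
  filter_upwards [eventually_ge_atTop a] with y hy
  have hq : 0 < (y - a) ^ 2 + b := by positivity
  rw [one_sub_div hq.ne', add_sub_cancel_right, sqrt_div' _ hq.le, sqrt_sq (sub_nonneg.2 hy),
    div_div, mul_comm]

lemma neg_inv_le_div_mul_sqrt_sq_add (hb : 0 < b) (y : ℝ) :
    -b⁻¹ ≤ (y - a) / (b * √((y - a) ^ 2 + b)) := by
  have habs : |y - a| ≤ √((y - a) ^ 2 + b) := abs_le_sqrt (by linarith)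
  rw [neg_le, ← neg_div, inv_eq_one_div, div_le_div_iff₀ (by positivity) hb]
  nlinarith [neg_abs_le (y - a)]

lemma integrableOn_Ioi_inv_sqrt_sq_add_pow_three (hb : 0 < b) (t : ℝ) :
    IntegrableOn (fun x => (√((x - a) ^ 2 + b) ^ 3)⁻¹) (Ioi t) :=
  integrableOn_Ioi_deriv_of_nonneg' (fun x _ => hasDerivAt_div_mul_sqrt_sq_add hb x)
    (fun x _ => by positivity) (tendsto_div_mul_sqrt_sq_add_atTop hb)

lemma integral_Ioi_inv_sqrt_sq_add_pow_three_le (hb : 0 < b) (t : ℝ) :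
    ∫ x in Ioi t, (√((x - a) ^ 2 + b) ^ 3)⁻¹ ≤ 2 / b := by
  rw [integral_Ioi_of_hasDerivAt_of_nonneg' (fun x _ => hasDerivAt_div_mul_sqrt_sq_add hb x)
    (fun x _ => by positivity) (tendsto_div_mul_sqrt_sq_add_atTop hb)]
  linarith [neg_inv_le_div_mul_sqrt_sq_add (a := a) hb t, show 2 / b = b⁻¹ + b⁻¹ by ring]

end InvSqrtCube

lemma sq_mul_sq_mul_cube_le {x σ : ℝ} (hx : 0 < x) (hσ : 0 ≤ σ) (hσ₁ : σ ≤ 1) :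
    x ^ 2 * (x ^ 2 + 3 / 2) ^ 2 * ((x - 1) ^ 2 + 2 * σ) ^ 3
      ≤ 3600 * ((1 - x ^ 2) ^ 2 + 4 * x ^ 2 * σ) ^ 3 := by
  set E := (x - 1) ^ 2 + 2 * σ
  set D := (1 - x ^ 2) ^ 2 + 4 * x ^ 2 * σ
  have hE : 0 ≤ E := by positivity
  rcases le_total (x ^ 2) (1 / 2) with hsmall | hlarge
  · have hP : x ^ 2 * (x ^ 2 + 3 / 2) ^ 2 ≤ 2 := by nlinarith
    have hE3 : E ^ 3 ≤ 3 ^ 3 := pow_le_pow_left₀ hE (by nlinarith) 3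
    have hD : (1 / 4) ^ 3 ≤ D ^ 3 := pow_le_pow_left₀ (by norm_num) (by nlinarith) 3
    nlinarith [mul_le_mul hP hE3 (pow_nonneg hE 3) zero_le_two]
  · have hED : x ^ 2 * E ≤ D := by nlinarith [sq_nonneg (x - 1)]
    have hP : (x ^ 2 + 3 / 2) ^ 2 ≤ 16 * x ^ 4 := by nlinarith
    have hED3 : (x ^ 2 * E) ^ 3 ≤ D ^ 3 := pow_le_pow_left₀ (by positivity) hED 3
    calc x ^ 2 * (x ^ 2 + 3 / 2) ^ 2 * E ^ 3 ≤ x ^ 2 * (16 * x ^ 4) * E ^ 3 := by gcongr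
      _ = 16 * (x ^ 2 * E) ^ 3 := by ring
      _ ≤ 3600 * D ^ 3 := by nlinarith [pow_nonneg (by positivity : 0 ≤ D) 3]

lemma integrand_le {x γ : ℝ} (hx : 0 < x) (hγ : sin γ ≠ 0) :
    x * √((3 / 2 - x ^ 2) ^ 2 + 6 * x ^ 2 * cos γ ^ 2)
        * ((1 - x ^ 2) ^ 2 + 4 * x ^ 2 * sin γ ^ 2) ^ (-(3 / 2 : ℝ))
      ≤ 60 * (√((x - 1) ^ 2 + 2 * sin γ ^ 2) ^ 3)⁻¹ := by
  have hNle : (3 / 2 - x ^ 2) ^ 2 + 6 * x ^ 2 * cos γ ^ 2 ≤ (x ^ 2 + 3 / 2) ^ 2 := by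
    nlinarith [mul_le_mul_of_nonneg_left (cos_sq_le_one γ) (sq_nonneg x)]
  set N := (3 / 2 - x ^ 2) ^ 2 + 6 * x ^ 2 * cos γ ^ 2
  set D := (1 - x ^ 2) ^ 2 + 4 * x ^ 2 * sin γ ^ 2
  set E := (x - 1) ^ 2 + 2 * sin γ ^ 2
  have hN : 0 ≤ N := by positivity
  have hD : 0 < D := by positivity
  have hE : 0 < E := by positivity
  have key : x ^ 2 * N * E ^ 3 ≤ 3600 * D ^ 3 :=
    le_trans (by gcongr) (sq_mul_sq_mul_cube_le hx (sq_nonneg _) (sin_sq_le_one γ))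
  rw [rpow_neg_three_halves hD.le, ← div_eq_mul_inv, ← div_eq_mul_inv,
    div_le_div_iff₀ (by positivity) (by positivity),
    ← pow_le_pow_iff_left₀ (by positivity) (by positivity) two_ne_zero]
  calc (x * √N * √E ^ 3) ^ 2 = x ^ 2 * √N ^ 2 * (√E ^ 2) ^ 3 := by ring
    _ = x ^ 2 * N * E ^ 3 := by rw [sq_sqrt hN, sq_sqrt hE.le]
    _ ≤ 3600 * D ^ 3 := key
    _ = (60 * √D ^ 3) ^ 2 := by
      rw [mul_pow, ← pow_mul, mul_comm 3, pow_mul, sq_sqrt hD.le]; norm_num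

theorem integral_bound_gamma :
    ∃ C : ℝ, 0 < C ∧ ∀ γ : ℝ, γ ∈ Set.Ioc (0 : ℝ) 1 →
      ∫ x in Set.Ioi (0 : ℝ),
          x * Real.sqrt ((3 / 2 - x ^ 2) ^ 2 + 6 * x ^ 2 * (Real.cos γ) ^ 2)
            * ((1 - x ^ 2) ^ 2 + 4 * x ^ 2 * (Real.sin γ) ^ 2) ^ (-(3 / 2 : ℝ))
        ≤ C * γ ^ (-(2 : ℝ)) := by
  refine ⟨15 * π ^ 2, by positivity, fun γ ⟨hγ₀, hγ₁⟩ => ?_⟩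
  have hjordan : 2 / π * γ ≤ sin γ := mul_le_sin hγ₀.le (by linarith [pi_gt_three])
  have hsin : 0 < sin γ := hjordan.trans_lt' (by positivity)
  have hb : 0 < 2 * sin γ ^ 2 := by positivity
  calc _ ≤ ∫ x in Ioi (0 : ℝ), 60 * (√((x - 1) ^ 2 + 2 * sin γ ^ 2) ^ 3)⁻¹ := by
        refine integral_mono_of_nonneg ?_
          ((integrableOn_Ioi_inv_sqrt_sq_add_pow_three hb 0).const_mul 60) ?_
        · filter_upwards [self_mem_ae_restrict measurableSet_Ioi] with x (hx : 0 < x)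
          positivity
        · filter_upwards [self_mem_ae_restrict measurableSet_Ioi] with x hx
          exact integrand_le hx hsin.ne'
    _ = 60 * ∫ x in Ioi (0 : ℝ), (√((x - 1) ^ 2 + 2 * sin γ ^ 2) ^ 3)⁻¹ := integral_const_mul _ _
    _ ≤ 60 * (2 / (2 * sin γ ^ 2)) := by
        gcongr; exact integral_Ioi_inv_sqrt_sq_add_pow_three_le hb 0
    _ = 60 / sin γ ^ 2 := by field_simp
    _ ≤ 60 / (2 / π * γ) ^ 2 := by gcongr
    _ = 15 * π ^ 2 * γ ^ (-(2 : ℝ)) := by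
        rw [rpow_neg hγ₀.le, rpow_two]; field_simp; ring
end

section
/- There exists an absolute constant C > 0 such that for all reals X ≥ 2, T ≥ 1 and all real t ≥ 1: | t·cosh(πt + 2iβt)/sinh(πt) + i·sinh(πt + 2iβt)/(2·tanh(β)·sinh(πt)) − ( t + (i/2)·(cosh β / sinh β) )·X^{it}·e^{−t/T} | ≤ C·e^{−πt}, where β = (1/2)·log X + i/(2T) and X^{it} = e^{it·log X}. -/
/-!
With `z = π t` and `w = 2 i β t = i t log X - t / T`, the first two terms are
`(a cosh (z + w) + b sinh (z + w)) / sinh z` with `a = t` and `b = (i / 2) coth β`.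
In exponentials, subtracting `(a + b) e^w = (a + b) e^w (e^z - e^{-z}) / (2 sinh z)` cancels the
`e^{z + w}` term and leaves `((a + b) e^w + (a - b) e^{-w}) e^{-z} / (2 sinh z)`.
Since `|coth β| ≤ (X + 1) / (X - 1) ≤ 3`, `|e^{±w}| = e^{∓t/T} ≤ e^t`, and `e^{2t} / sinh (π t)`
is bounded for `t ≥ 1` because `π > 2`, this is `O(e^{-π t})`.
-/

open Complex Real

lemma mul_cosh_add_mul_sinh_div_sinh_sub (a b z w : ℂ) (hz : Complex.sinh z ≠ 0) :
    (a * Complex.cosh (z + w) + b * Complex.sinh (z + w)) / Complex.sinh z - (a + b) * cexp w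
      = ((a + b) * cexp w + (a - b) * cexp (-w)) * cexp (-z) / (2 * Complex.sinh z) := by
  rw [div_sub' hz, div_eq_div_iff hz (mul_ne_zero two_ne_zero hz)]
  simp only [Complex.cosh, Complex.sinh, neg_add, Complex.exp_add]
  ring

lemma norm_mul_cosh_add_mul_sinh_div_sinh_sub_le {s : ℝ} (hs : 0 < s) (a b w : ℂ) :
    ‖(a * Complex.cosh (s + w) + b * Complex.sinh (s + w)) / Complex.sinh s - (a + b) * cexp w‖
      ≤ (‖a‖ + ‖b‖) * (‖cexp w‖ + ‖cexp (-w)‖) * rexp (-s) / (2 * Real.sinh s) := by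
  have hsinh : 0 < Real.sinh s := Real.sinh_pos_iff.mpr hs
  have hsinh_ofReal : Complex.sinh s = (Real.sinh s : ℂ) := (ofReal_sinh s).symm
  have hsinh_ne : Complex.sinh s ≠ 0 := by rw [hsinh_ofReal]; exact_mod_cast hsinh.ne'
  rw [mul_cosh_add_mul_sinh_div_sinh_sub a b s w hsinh_ne, norm_div, norm_mul, hsinh_ofReal,
    norm_mul, Complex.norm_two, norm_real, Real.norm_of_nonneg hsinh.le, ← ofReal_neg,
    norm_exp_ofReal]
  gcongr
  calc ‖(a + b) * cexp w + (a - b) * cexp (-w)‖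
      ≤ ‖a + b‖ * ‖cexp w‖ + ‖a - b‖ * ‖cexp (-w)‖ := by
        simpa only [norm_mul] using norm_add_le ((a + b) * cexp w) ((a - b) * cexp (-w))
    _ ≤ (‖a‖ + ‖b‖) * ‖cexp w‖ + (‖a‖ + ‖b‖) * ‖cexp (-w)‖ := by
        gcongr
        · exact norm_add_le a b
        · exact norm_sub_le a b
    _ = (‖a‖ + ‖b‖) * (‖cexp w‖ + ‖cexp (-w)‖) := by ring

lemma cosh_div_sinh_eq (β : ℂ) :
    Complex.cosh β / Complex.sinh β = (cexp (2 * β) + 1) / (cexp (2 * β) - 1) := by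
  simp only [Complex.cosh, Complex.sinh, two_mul, Complex.exp_add, Complex.exp_neg]
  have := Complex.exp_ne_zero β
  field_simp

lemma norm_cosh_div_sinh_le {β : ℂ} (hβ : 0 < β.re) :
    ‖Complex.cosh β / Complex.sinh β‖ ≤ (rexp (2 * β.re) + 1) / (rexp (2 * β.re) - 1) := by
  have hnorm : ‖cexp (2 * β)‖ = rexp (2 * β.re) := by simp [Complex.norm_exp]
  have hgt : 1 < rexp (2 * β.re) := Real.one_lt_exp_iff.mpr (by linarith)
  rw [cosh_div_sinh_eq, norm_div]
  gcongr
  · simpa [hnorm] using norm_add_le (cexp (2 * β)) 1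
  · simpa [hnorm] using norm_sub_norm_le (cexp (2 * β)) 1

lemma norm_cosh_div_sinh_le_three {β : ℂ} {X : ℝ} (hX : 2 ≤ X) (hβ : 2 * β.re = Real.log X) :
    ‖Complex.cosh β / Complex.sinh β‖ ≤ 3 := by
  have hlog : 0 < Real.log X := Real.log_pos (by linarith)
  have hcoth := norm_cosh_div_sinh_le (β := β) (by linarith)
  rw [hβ, Real.exp_log (by linarith)] at hcoth
  refine hcoth.trans ?_
  rw [div_le_iff₀ (by linarith)]
  linarith

-- No side conditions: with `0⁻¹ = 0` both sides vanish when `sinh β = 0` or `cosh β = 0`.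
lemma I_mul_div_two_mul_tanh_mul (β x y : ℂ) :
    I * x / (2 * Complex.tanh β * y) = I / 2 * (Complex.cosh β / Complex.sinh β) * x / y := by
  rw [Complex.tanh_eq_sinh_div_cosh]
  simp only [div_eq_mul_inv, mul_inv, inv_inv]
  ring

lemma exp_two_mul_I_mul_mul (X T t : ℝ) (hT : T ≠ 0) :
    cexp (2 * I * (Real.log X / 2 + I / (2 * T)) * t)
      = cexp (I * t * Real.log X) * rexp (-t / T) := by
  have hT' : (T : ℂ) ≠ 0 := by exact_mod_cast hT
  rw [ofReal_exp, ← Complex.exp_add]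
  congr 1
  push_cast
  field_simp
  linear_combination (t : ℂ) * I_sq

lemma norm_exp_two_mul_I_mul_mul (X T t : ℝ) (hT : T ≠ 0) :
    ‖cexp (2 * I * (Real.log X / 2 + I / (2 * T)) * t)‖ = rexp (-t / T) := by
  rw [exp_two_mul_I_mul_mul X T t hT, norm_mul, norm_real, Real.norm_of_nonneg (Real.exp_pos _).le,
    Complex.norm_exp]
  simp

lemma mul_one_add_exp_mul_exp_neg_div_two_sinh_le {t : ℝ} (ht : 1 ≤ t) :
    (t + 3 / 2) * (1 + rexp t) * rexp (-π * t) / (2 * Real.sinh (π * t)) ≤ 8 * rexp (-π * t) := by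
  have hadd_one : t + 1 ≤ rexp t := Real.add_one_le_exp t
  have hone_le : 1 ≤ rexp t := Real.one_le_exp (by linarith)
  have hexp_two_mul : rexp t * rexp t ≤ rexp (π * t) := by
    rw [← Real.exp_add]; exact Real.exp_le_exp.mpr (by nlinarith [Real.pi_gt_three])
  have hexp_neg : rexp (-(π * t)) ≤ 1 := Real.exp_le_one_iff.mpr (by nlinarith [Real.pi_pos])
  have hsinh : (rexp (π * t) - 1) / 2 ≤ Real.sinh (π * t) := by rw [Real.sinh_eq]; linarith
  have hpos : 0 < Real.sinh (π * t) := Real.sinh_pos_iff.mpr (by nlinarith [Real.pi_pos])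
  rw [div_le_iff₀ (by positivity), mul_right_comm (8 : ℝ)]
  exact mul_le_mul_of_nonneg_right (by nlinarith) (Real.exp_pos _).le

theorem phihat_asymptotic :
    ∃ C : ℝ, 0 < C ∧ ∀ (X T : ℝ), 2 ≤ X → 1 ≤ T → ∀ t : ℝ, 1 ≤ t →
      (let β : ℂ := (Real.log X) / 2 + Complex.I / (2 * T);
      ‖(t : ℂ) * Complex.cosh (Real.pi * t + 2 * Complex.I * β * t)
          / Complex.sinh ((Real.pi * t : ℝ))
        + Complex.I * Complex.sinh (Real.pi * t + 2 * Complex.I * β * t)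
          / (2 * Complex.tanh β * Complex.sinh ((Real.pi * t : ℝ)))
        - ((t : ℂ) + (Complex.I / 2) * (Complex.cosh β / Complex.sinh β))
          * Complex.exp (Complex.I * t * Real.log X) * Real.exp (-t / T)‖)
      ≤ C * Real.exp (-Real.pi * t) := by
  refine ⟨8, by norm_num, fun X T hX hT t ht => ?_⟩
  have hT0 : T ≠ 0 := by linarith
  dsimp only
  set β : ℂ := (Real.log X : ℂ) / 2 + I / (2 * T)
  set w : ℂ := 2 * I * β * t
  have hcoth : ‖Complex.cosh β / Complex.sinh β‖ ≤ 3 :=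
    norm_cosh_div_sinh_le_three hX (by simp [β, Complex.div_re]; ring)
  have hw : ‖cexp w‖ = rexp (-t / T) := norm_exp_two_mul_I_mul_mul X T t hT0
  have hw' : ‖cexp (-w)‖ = rexp (t / T) := by
    rw [Complex.exp_neg, norm_inv, hw, ← Real.exp_neg, neg_div, neg_neg]
  have hπt : (π : ℂ) * t = ((π * t : ℝ) : ℂ) := by push_cast; ring
  rw [hπt, I_mul_div_two_mul_tanh_mul, ← add_div, mul_assoc _ (cexp _),
    ← exp_two_mul_I_mul_mul X T t hT0]
  calc _ ≤ _ := norm_mul_cosh_add_mul_sinh_div_sinh_sub_le (mul_pos pi_pos (by linarith)) _ _ _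
    _ ≤ (t + 3 / 2) * (1 + rexp t) * rexp (-π * t) / (2 * Real.sinh (π * t)) := by
      rw [hw, hw', norm_real, Real.norm_of_nonneg (by linarith), norm_mul, norm_div I, norm_I,
        Complex.norm_two, neg_mul]
      gcongr
      · linarith
      · exact Real.exp_le_one_iff.mpr (div_nonpos_of_nonpos_of_nonneg (by linarith) (by linarith))
      · exact div_le_self (by linarith) hT
    _ ≤ 8 * rexp (-π * t) := mul_one_add_exp_mul_exp_neg_div_two_sinh_le ht
end
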